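/- Let $X_1,\dots,X_n$, $Z_1,\dots,Z_n$ be random variables and $E_1,\dots,E_n$ be Bernoulli random variables, and define $Y_i = E_i X_i + (1-E_i) Z_i$ for all $i$. If $E_1,\dots,E_n$, $Z_1,\dots,Z_n$ and $\mathbf{X}=(X_1,\dots,X_n)$ are mutually independent, then $\mathbf{K}\big(\mathcal{L}(\mathbf{Y})\,\big\|\,\mathcal{L}(Y_1)\otimes\cdots\otimes\mathcal{L}(Y_n)\big) \le \mathbf{K}\big(\mathcal{L}(\mathbf{X})\,\big\|\,\mathcal{L}(X_1)\otimes\cdots\otimes\mathcal{L}(X_n)\big)$. -/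

import Mathlib

open MeasureTheory ProbabilityTheory
open scoped ENNReal NNReal

/- The Kullback-Leibler divergence, valued in `ℝ≥0∞` (appropriate for probability measures). -/
open Classical in
noncomputable def klDiv {α : Type*} [MeasurableSpace α] (μ ν : Measure α) : ℝ≥0∞ :=
  if μ ≪ ν ∧ Integrable (llr μ ν) μ then ENNReal.ofReal (∫ x, llr μ ν x ∂μ) else ⊤

/-- Index type for the mutual independence of `E_1, …, E_n, Z_1, …, Z_n` and the vector `X`. -/
def contType (n : ℕ) : (Fin n ⊕ Fin n) ⊕ Unit → Type :=
  fun k => match k with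
  | .inl _ => ℝ
  | .inr _ => Fin n → ℝ

instance contTypeMeasurableSpace (n : ℕ) (k : (Fin n ⊕ Fin n) ⊕ Unit) :
    MeasurableSpace (contType n k) := by
  cases k with
  | inl _ => exact (inferInstance : MeasurableSpace ℝ)
  | inr _ => exact (inferInstance : MeasurableSpace (Fin n → ℝ))

/-!
Independence makes the law of `(X, W)`, where `W = ((E i, Z i))ᵢ`, the product of `L(X)` with the
noise law `ρ = ⊗ᵢ (L(E i) ⊗ L(Z i))`, and `Y = T (X, W)` for a map `T` acting coordinatewise.
Since each triple `(X i, E i, Z i)` is independent as well, `⊗ᵢ L(Y i)` is the image under `T`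
of `(⊗ᵢ L(X i)) ⊗ ρ`. With `μ = L(X)` and `ν = ⊗ᵢ L(X i)`, the left side is thus
`K((μ ⊗ ρ).map T ‖ (ν ⊗ ρ).map T)`, which the data processing inequality together with
`K(μ ⊗ ρ ‖ ν ⊗ ρ) = K(μ ‖ ν)` bounds by the right side.
-/

-- Mathlib's `klDiv` adds the correction `ν.real univ - μ.real univ`, which vanishes here.
lemma klDiv_eq_informationTheory_klDiv {α : Type*} [MeasurableSpace α] {μ ν : Measure α}
    (h : μ Set.univ = ν Set.univ) : klDiv μ ν = InformationTheory.klDiv μ ν := by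
  by_cases hμν : μ ≪ ν ∧ Integrable (llr μ ν) μ
  · rw [klDiv, if_pos hμν, InformationTheory.klDiv_of_ac_of_integrable hμν.1 hμν.2,
      measureReal_def, measureReal_def, h, add_sub_cancel_right]
  · rw [klDiv, if_neg hμν, eq_comm, InformationTheory.klDiv_eq_top_iff]
    tauto

lemma klDiv_map_prod_le {α β γ : Type*} [MeasurableSpace α] [MeasurableSpace β]
    [MeasurableSpace γ] (μ ν : Measure α) [IsProbabilityMeasure μ] [IsProbabilityMeasure ν]
    (ρ : Measure β) [IsProbabilityMeasure ρ] {F : α × β → γ} (hF : Measurable F) :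
    klDiv ((μ.prod ρ).map F) ((ν.prod ρ).map F) ≤ klDiv μ ν := by
  have : IsProbabilityMeasure ((μ.prod ρ).map F) := Measure.isProbabilityMeasure_map hF.aemeasurable
  have : IsProbabilityMeasure ((ν.prod ρ).map F) := Measure.isProbabilityMeasure_map hF.aemeasurable
  rw [klDiv_eq_informationTheory_klDiv (by simp), klDiv_eq_informationTheory_klDiv (by simp),
    ← Measure.compProd_const, ← Measure.compProd_const]
  calc InformationTheory.klDiv ((μ ⊗ₘ Kernel.const α ρ).map F) ((ν ⊗ₘ Kernel.const α ρ).map F)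
      ≤ InformationTheory.klDiv (μ ⊗ₘ Kernel.const α ρ) (ν ⊗ₘ Kernel.const α ρ) :=
        InformationTheory.klDiv_map_le _ _ hF
    _ = InformationTheory.klDiv μ ν := InformationTheory.klDiv_compProd_left _ _ _

lemma pi_map_prod_eq_map_prod_pi {ι α β γ : Type*} [Fintype ι] [MeasurableSpace α]
    [MeasurableSpace β] [MeasurableSpace γ] (a : ι → Measure α) (b : ι → Measure β)
    [∀ i, IsFiniteMeasure (a i)] [∀ i, IsFiniteMeasure (b i)] {g : ι → α × β → γ}
    (hg : ∀ i, Measurable (g i)) :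
    Measure.pi (fun i => ((a i).prod (b i)).map (g i)) =
      ((Measure.pi a).prod (Measure.pi b)).map (fun p i => g i (p.1 i, p.2 i)) := by
  rw [← Measure.pi_map_pi fun i => (hg i).aemeasurable,
    ← (measurePreserving_arrowProdEquivProdArrow α β ι a b).symm.map_eq,
    Measure.map_map (by fun_prop) (MeasurableEquiv.measurable _)]
  rfl

lemma map_coord_prod_coord_eq_of_map_prod_eq {Ω ι α β : Type*} [MeasurableSpace Ω] [Fintype ι]
    [MeasurableSpace α] [MeasurableSpace β] {μ : Measure Ω} [IsFiniteMeasure μ]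
    {U : Ω → ι → α} {V : Ω → ι → β} (hU : Measurable U) (hV : Measurable V)
    {ν : ι → Measure β} [∀ i, IsProbabilityMeasure (ν i)]
    (h : μ.map (fun ω => (U ω, V ω)) = (μ.map U).prod (Measure.pi ν)) (i : ι) :
    μ.map (fun ω => (U ω i, V ω i)) = (μ.map fun ω => U ω i).prod (ν i) := by
  calc μ.map (fun ω => (U ω i, V ω i))
      = (μ.map fun ω => (U ω, V ω)).map (Prod.map (fun u => u i) (fun v => v i)) :=
        (Measure.map_map ((measurable_pi_apply i).prodMap (measurable_pi_apply i))
          (hU.prodMk hV)).symm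
    _ = (μ.map fun ω => U ω i).prod (ν i) := by
      rw [h, ← Measure.map_prod_map _ _ (measurable_pi_apply i) (measurable_pi_apply i),
        (measurePreserving_eval ν i).map_eq, Measure.map_map (measurable_pi_apply i) hU]
      rfl

def contaminate (p : ℝ × ℝ × ℝ) : ℝ := p.2.1 * p.1 + (1 - p.2.1) * p.2.2

lemma measurable_contaminate : Measurable contaminate := by
  unfold contaminate; fun_prop

def contaminateVec {n : ℕ} (p : (Fin n → ℝ) × (Fin n → ℝ × ℝ)) : Fin n → ℝ :=
  fun i => contaminate (p.1 i, p.2 i)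

lemma measurable_contaminateVec {n : ℕ} : Measurable (contaminateVec (n := n)) :=
  measurable_pi_lambda _ fun _ => measurable_contaminate.comp (by fun_prop)

lemma map_prod_eq_prod_pi_of_iIndepFun {Ω : Type*} [MeasurableSpace Ω] {μ : Measure Ω}
    [IsProbabilityMeasure μ] {n : ℕ} {f : ∀ k, Ω → contType n k} (hf : ∀ k, Measurable (f k))
    (hindep : iIndepFun (m := fun k => contTypeMeasurableSpace n k) f μ) :
    -- The ascriptions unfold `contType`, so both sides carry the standard σ-algebras.
    μ.map (fun ω => ((f (.inr ()) ω : Fin n → ℝ),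
        fun i => ((f (.inl (.inl i)) ω : ℝ), (f (.inl (.inr i)) ω : ℝ)))) =
      (μ.map (f (.inr ())) : Measure (Fin n → ℝ)).prod (Measure.pi fun i =>
        (μ.map (f (.inl (.inl i))) : Measure ℝ).prod (μ.map (f (.inl (.inr i))) : Measure ℝ)) := by
  have : IsProbabilityMeasure (μ.map (f (.inr ())) : Measure (Fin n → ℝ)) :=
    Measure.isProbabilityMeasure_map (hf _).aemeasurable
  have : ∀ i, IsProbabilityMeasure (μ.map (f (.inl (.inl i))) : Measure ℝ) :=
    fun _ => Measure.isProbabilityMeasure_map (hf _).aemeasurable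
  have : ∀ i, IsProbabilityMeasure (μ.map (f (.inl (.inr i))) : Measure ℝ) :=
    fun _ => Measure.isProbabilityMeasure_map (hf _).aemeasurable
  have hreshape : MeasurePreserving _ (Measure.pi fun k => μ.map (f k))
      ((μ.map (f (.inr ())) : Measure (Fin n → ℝ)).prod (Measure.pi fun i =>
        (μ.map (f (.inl (.inl i))) : Measure ℝ).prod (μ.map (f (.inl (.inr i))) : Measure ℝ))) :=
    ((MeasurePreserving.id _).prod
      (measurePreserving_arrowProdEquivProdArrow ℝ ℝ (Fin n) _ _).symm).comp <|
    Measure.measurePreserving_swap.comp <|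
    ((measurePreserving_sumPiEquivProdPi _).prod (measurePreserving_piUnique _)).comp
      (measurePreserving_sumPiEquivProdPi fun k => μ.map (f k))
  rw [← hreshape.map_eq, ← hindep.map_fun_eq_pi_map fun k => (hf k).aemeasurable,
    Measure.map_map hreshape.measurable (measurable_pi_lambda _ hf)]
  rfl

theorem klDiv_contaminated_le
    {Ω : Type*} [MeasurableSpace Ω] (μ : Measure Ω) [IsProbabilityMeasure μ]
    (n : ℕ) (X Z E : Fin n → Ω → ℝ)
    (hX : ∀ i, Measurable (X i)) (hZ : ∀ i, Measurable (Z i)) (hE : ∀ i, Measurable (E i))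
    (Y : Fin n → Ω → ℝ) (hY : ∀ i ω, Y i ω = E i ω * X i ω + (1 - E i ω) * Z i ω)
    (hindep : iIndepFun (m := fun k => contTypeMeasurableSpace n k)
      (fun k => match k with
        | .inl (.inl j) => E j
        | .inl (.inr j) => Z j
        | .inr _ => fun ω => fun i : Fin n => X i ω) μ) :
    klDiv (μ.map (fun ω => fun i : Fin n => Y i ω)) (Measure.pi (fun i => μ.map (Y i))) ≤
      klDiv (μ.map (fun ω => fun i : Fin n => X i ω)) (Measure.pi (fun i => μ.map (X i))) := by
  have hXvec : Measurable fun ω i => X i ω := measurable_pi_lambda _ hX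
  have hnoise : Measurable fun ω i => (E i ω, Z i ω) :=
    measurable_pi_lambda _ fun i => (hE i).prodMk (hZ i)
  have := fun i => Measure.isProbabilityMeasure_map (μ := μ) (hE i).aemeasurable
  have := fun i => Measure.isProbabilityMeasure_map (μ := μ) (hZ i).aemeasurable
  have := fun i => Measure.isProbabilityMeasure_map (μ := μ) (hX i).aemeasurable
  have := Measure.isProbabilityMeasure_map (μ := μ) hXvec.aemeasurable
  have hjoint : μ.map (fun ω => ((fun i => X i ω), fun i => (E i ω, Z i ω))) =
      (μ.map fun ω i => X i ω).prod (Measure.pi fun i => (μ.map (E i)).prod (μ.map (Z i))) :=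
    map_prod_eq_prod_pi_of_iIndepFun (by rintro ((j | j) | _); exacts [hE j, hZ j, hXvec]) hindep
  have hlawY : μ.map (fun ω i => Y i ω) = ((μ.map fun ω i => X i ω).prod
      (Measure.pi fun i => (μ.map (E i)).prod (μ.map (Z i)))).map contaminateVec := by
    rw [← hjoint, Measure.map_map measurable_contaminateVec (hXvec.prodMk hnoise)]
    congr with ω i
    exact hY i ω
  have hlawYi : ∀ i, μ.map (Y i) =
      ((μ.map (X i)).prod ((μ.map (E i)).prod (μ.map (Z i)))).map contaminate := by
    intro i
    rw [← map_coord_prod_coord_eq_of_map_prod_eq hXvec hnoise hjoint i,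
      Measure.map_map measurable_contaminate (by fun_prop)]
    congr with ω
    exact hY i ω
  rw [hlawY, funext hlawYi, pi_map_prod_eq_map_prod_pi _ _ fun _ => measurable_contaminate]
  exact klDiv_map_prod_le _ _ _ measurable_contaminateVec
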